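/- arXiv:2406.13091 — 3 statements merged into one kernel-verified Lean document; each statement's English description precedes it below -/
import Mathlib

section
/- Let A ∈ ℝ, G ≠ 0, C, V > 0 and λ > 0. Suppose 𝒫 : [0,∞) → ℝ satisfies 𝒫(0) = P₀ > 0 and the ODE 𝒫'(t) = 2A·𝒫(t) + G² - λ·𝒫(t)²·C²/(𝒫(t)·C² + V), with λ > 2A. Then for all t ≥ 0, 𝒫(t) ≥ min{P₀, G²/(λ - 2A)}. -/
theorem expected_covariance_lower_bound
    (A G C V lam P₀ : ℝ) (hG : G ≠ 0) (hC : 0 < C) (hV : 0 < V)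
    (hlam : 0 < lam) (hlamA : 2 * A < lam) (hP₀ : 0 < P₀)
    (Pc : ℝ → ℝ) (h0 : Pc 0 = P₀)
    (hode : ∀ t, 0 ≤ t → HasDerivAt Pc
      (2 * A * Pc t + G ^ 2 - lam * (Pc t) ^ 2 * C ^ 2 / (Pc t * C ^ 2 + V)) t) :
    ∀ t, 0 ≤ t → min P₀ (G ^ 2 / (lam - 2 * A)) ≤ Pc t := by
  intro t ht
  by_contra hcon
  push_neg at hcon
  set m' := G ^ 2 / (lam - 2 * A) with hm'
  have hG2 : 0 < G ^ 2 := by positivity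
  have hlam2 : 0 < lam - 2 * A := by linarith
  have hm'pos : 0 < m' := div_pos hG2 hlam2
  set m := min P₀ m' with hm
  have hmpos : 0 < m := lt_min hP₀ hm'pos
  have hmm' : m ≤ m' := min_le_right _ _
  have hmP₀ : m ≤ P₀ := min_le_left _ _
  have key : ∀ p : ℝ, 0 < p → p < m' →
      0 < 2 * A * p + G ^ 2 - lam * p ^ 2 * C ^ 2 / (p * C ^ 2 + V) := by
    intro p hp hpm
    have hden : 0 < p * C ^ 2 + V := by positivity
    have h1 : lam * p ^ 2 * C ^ 2 / (p * C ^ 2 + V) ≤ lam * p := by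
      rw [div_le_iff₀ hden]
      nlinarith [mul_nonneg (mul_nonneg hlam.le hp.le) hV.le]
    have h2 : p * (lam - 2 * A) < G ^ 2 := by
      rw [hm', lt_div_iff₀ hlam2] at hpm
      linarith
    nlinarith
  have hcont : ∀ u : ℝ, 0 ≤ u → ContinuousAt Pc u := fun u hu => (hode u hu).continuousAt
  set c := (m + max (Pc t) 0) / 2 with hc
  have hmaxm : max (Pc t) 0 < m := max_lt hcon hmpos
  have hmax0 : (0:ℝ) ≤ max (Pc t) 0 := le_max_right _ _
  have hc0 : 0 < c := by rw [hc]; linarith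
  have hcm : c < m := by rw [hc]; linarith
  have hPtc : Pc t < c := by
    have := le_max_left (Pc t) 0
    rw [hc]; linarith
  -- first time Pc drops to c
  set T := Set.Icc 0 t ∩ Pc ⁻¹' Set.Iic c with hT
  have hTne : T.Nonempty := ⟨t, ⟨ht, le_rfl⟩, hPtc.le⟩
  have hTbdd : BddBelow T := ⟨0, fun u hu => hu.1.1⟩
  have hPcontT : ContinuousOn Pc (Set.Icc 0 t) :=
    fun u hu => (hcont u hu.1).continuousWithinAt
  have hTclosed : IsClosed T :=
    hPcontT.preimage_isClosed_of_isClosed isClosed_Icc isClosed_Iic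
  set t₁ := sInf T with ht₁def
  have ht₁mem : t₁ ∈ T := hTclosed.csInf_mem hTne hTbdd
  have ht₁0 : 0 ≤ t₁ := ht₁mem.1.1
  have ht₁t : t₁ ≤ t := ht₁mem.1.2
  have hPt₁ : Pc t₁ ≤ c := ht₁mem.2
  have h_above : ∀ u, 0 ≤ u → u < t₁ → c < Pc u := by
    intro u hu0 hut₁
    by_contra hu
    push_neg at hu
    have : u ∈ T := ⟨⟨hu0, hut₁.le.trans ht₁t⟩, hu⟩
    exact absurd (csInf_le hTbdd this) (not_le.2 hut₁)
  have ht₁pos : 0 < t₁ := by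
    rcases ht₁0.lt_or_eq with h | h
    · exact h
    · exfalso
      rw [← h, h0] at hPt₁
      linarith
  -- last time before t₁ where Pc ≥ m
  set S := Set.Icc 0 t₁ ∩ Pc ⁻¹' Set.Ici m with hS
  have hSne : S.Nonempty := ⟨0, ⟨le_rfl, ht₁0⟩, by rw [Set.mem_preimage, h0]; exact hmP₀⟩
  have hSbdd : BddAbove S := ⟨t₁, fun u hu => hu.1.2⟩
  have hPcontS : ContinuousOn Pc (Set.Icc 0 t₁) :=
    fun u hu => (hcont u hu.1).continuousWithinAt
  have hSclosed : IsClosed S :=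
    hPcontS.preimage_isClosed_of_isClosed isClosed_Icc isClosed_Ici
  set s₁ := sSup S with hs₁def
  have hs₁mem : s₁ ∈ S := hSclosed.csSup_mem hSne hSbdd
  have hs₁0 : 0 ≤ s₁ := hs₁mem.1.1
  have hs₁t₁ : s₁ ≤ t₁ := hs₁mem.1.2
  have hPs₁ : m ≤ Pc s₁ := hs₁mem.2
  have hs₁lt : s₁ < t₁ := by
    rcases hs₁t₁.lt_or_eq with h | h
    · exact h
    · exfalso; rw [h] at hPs₁; linarith
  have h_below : ∀ u, s₁ < u → u ≤ t₁ → Pc u < m := by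
    intro u hsu hut₁
    by_contra hu
    push_neg at hu
    have : u ∈ S := ⟨⟨hs₁0.trans hsu.le, hut₁⟩, hu⟩
    exact absurd (le_csSup hSbdd this) (not_le.2 hsu)
  have hmono : StrictMonoOn Pc (Set.Icc s₁ t₁) := by
    apply strictMonoOn_of_deriv_pos (convex_Icc _ _)
    · exact fun u hu => (hcont u (hs₁0.trans hu.1)).continuousWithinAt
    · intro x hx
      rw [interior_Icc] at hx
      have hx0 : 0 ≤ x := hs₁0.trans hx.1.le
      rw [(hode x hx0).deriv]
      apply key
      · exact hc0.trans (h_above x hx0 hx.2)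
      · exact (h_below x hx.1 hx.2.le).trans_le hmm'
  have hfin := hmono (Set.left_mem_Icc.2 hs₁lt.le) (Set.right_mem_Icc.2 hs₁lt.le) hs₁lt
  linarith
end

section
/- Let A ∈ ℝ, C, V > 0, λ > 0, and 0 < γ < 1 with λ(1 - γ²) > 2A. Suppose e : [0,∞) → ℝ is differentiable and satisfies (d/dt)(e(t)²) ≤ 2(2A - λ)·e(t)² + 2λγ²·e(t)² + (2/M)·|e(t)|·G² + (2λ/(M·C²))·V·|e(t)| for constants G ∈ ℝ and M ≥ 1. Then limsup_{t→∞} |e(t)| ≤ (G² + λV/C²) / (M·(λ(1-γ²) - 2A)). -/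
private lemma aux_concave (a b x : ℝ) (ha : 0 < a) :
    -2 * a * x ^ 2 + 2 * b * x ≤ -a * x ^ 2 + b ^ 2 / a := by
  rw [← sub_nonneg]
  have h : -a * x ^ 2 + b ^ 2 / a - (-2 * a * x ^ 2 + 2 * b * x)
      = (a * x - b) ^ 2 / a := by field_simp; ring
  rw [h]; positivity

private lemma aux_gb (a b E : ℝ) (ha : a ≠ 0) :
    b ^ 2 / a / (-a) * (E - 1) = (b / a) ^ 2 * (1 - E) := by
  field_simp; ring

theorem error_ultimate_bound
    (A C V lam γ G : ℝ) (M : ℝ) (hC : 0 < C) (hV : 0 < V) (hlam : 0 < lam)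
    (hγ0 : 0 < γ) (hγ1 : γ < 1) (hcontr : 2 * A < lam * (1 - γ ^ 2)) (hM : 1 ≤ M)
    (e : ℝ → ℝ) (hdiff : Differentiable ℝ e)
    (hineq : ∀ t, 0 ≤ t →
      deriv (fun s => (e s) ^ 2) t ≤
        2 * (2 * A - lam) * (e t) ^ 2 + 2 * lam * γ ^ 2 * (e t) ^ 2
          + (2 / M) * |e t| * G ^ 2 + (2 * lam / (M * C ^ 2)) * V * |e t|) :
    Filter.limsup (fun t => |e t|) Filter.atTop ≤
      (G ^ 2 + lam * V / C ^ 2) / (M * (lam * (1 - γ ^ 2) - 2 * A)) := by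
  have hM0 : (0 : ℝ) < M := lt_of_lt_of_le one_pos hM
  set α : ℝ := lam * (1 - γ ^ 2) - 2 * A with hα_def
  have hα : 0 < α := by simp only [hα_def]; linarith
  set β : ℝ := (G ^ 2 + lam * V / C ^ 2) / M with hβ_def
  have hβ : 0 ≤ β := by
    apply div_nonneg _ hM0.le
    have : 0 < lam * V / C ^ 2 := by positivity
    nlinarith [sq_nonneg G]
  set f : ℝ → ℝ := fun s => (e s) ^ 2 with hf_def
  have hfd : Differentiable ℝ f := hdiff.pow 2
  -- linear differential inequality via concavity
  have bound : ∀ t, 0 ≤ t → deriv f t ≤ (-α) * f t + β ^ 2 / α := by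
    intro t ht
    have h1 := hineq t ht
    have hrhs : 2 * (2 * A - lam) * (e t) ^ 2 + 2 * lam * γ ^ 2 * (e t) ^ 2
          + (2 / M) * |e t| * G ^ 2 + (2 * lam / (M * C ^ 2)) * V * |e t|
        = -2 * α * (e t) ^ 2 + 2 * β * |e t| := by
      have hC2 : (C : ℝ) ^ 2 ≠ 0 := by positivity
      have hMne : (M : ℝ) ≠ 0 := ne_of_gt hM0
      simp only [hα_def, hβ_def]
      field_simp
      ring
    rw [hrhs] at h1
    refine h1.trans ?_
    have hx : (e t) ^ 2 = |e t| ^ 2 := (sq_abs (e t)).symm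
    have key : -2 * α * |e t| ^ 2 + 2 * β * |e t| ≤ (-α) * |e t| ^ 2 + β ^ 2 / α :=
      aux_concave α β (|e t|) hα
    calc -2 * α * (e t) ^ 2 + 2 * β * |e t|
        = -2 * α * |e t| ^ 2 + 2 * β * |e t| := by rw [hx]
      _ ≤ (-α) * |e t| ^ 2 + β ^ 2 / α := key
      _ = (-α) * f t + β ^ 2 / α := by rw [hf_def, ← hx]
  -- Gronwall
  have gron : ∀ t, 0 ≤ t → f t ≤ gronwallBound (f 0) (-α) (β ^ 2 / α) t := by
    intro t ht
    have := le_gronwallBound_of_liminf_deriv_right_le (f := f) (f' := deriv f)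
      (a := 0) (b := t) (hfd.continuous.continuousOn)
      (fun x _ r hr => by
        have hd : HasDerivWithinAt f (deriv f x) (Set.Ici x) x :=
          ((hfd x).hasDerivAt).hasDerivWithinAt
        have := hd.liminf_right_slope_le hr
        refine this.mono fun z hz => ?_
        rwa [slope_def_field, div_eq_inv_mul] at hz)
      le_rfl (fun x hx => bound x hx.1)
    simpa using this t ⟨ht, le_rfl⟩
  -- explicit bound : |e t| ≤ |e 0| * exp (-α * t / 2) + β / α  for t ≥ 0
  set g : ℝ → ℝ := fun t => |e 0| * Real.exp (-α * t / 2) + β / α with hg_def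
  have hle : ∀ t, 0 ≤ t → |e t| ≤ g t := by
    intro t ht
    have h1 : f t ≤ f 0 * Real.exp (-α * t)
        + β ^ 2 / α / (-α) * (Real.exp (-α * t) - 1) := by
      have h0 := gron t ht
      rw [gronwallBound_of_K_ne_0 (neg_ne_zero.mpr (ne_of_gt hα))] at h0
      exact h0
    have hexp : Real.exp (-α * t) ≤ 1 := by
      rw [Real.exp_le_one_iff]; nlinarith
    have hexp0 : 0 < Real.exp (-α * t) := Real.exp_pos _
    have h2 : f t ≤ (e 0) ^ 2 * Real.exp (-α * t) + (β / α) ^ 2 := by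
      rw [aux_gb α β (Real.exp (-α * t)) (ne_of_gt hα)] at h1
      have hb2 : (β / α) ^ 2 * (1 - Real.exp (-α * t)) ≤ (β / α) ^ 2 := by
        nlinarith [sq_nonneg (β / α)]
      have hf0 : f 0 = (e 0) ^ 2 := rfl
      calc f t ≤ f 0 * Real.exp (-α * t)
            + (β / α) ^ 2 * (1 - Real.exp (-α * t)) := h1
        _ ≤ (e 0) ^ 2 * Real.exp (-α * t) + (β / α) ^ 2 := by rw [hf0]; linarith
    have hgt0 : 0 ≤ g t :=
      add_nonneg (mul_nonneg (abs_nonneg _) (Real.exp_pos _).le) (div_nonneg hβ hα.le)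
    have hsq : f t ≤ (g t) ^ 2 := by
      have hes : Real.exp (-α * t / 2) ^ 2 = Real.exp (-α * t) := by
        rw [← Real.exp_nat_mul]; ring_nf
      have : (g t) ^ 2 = (e 0) ^ 2 * Real.exp (-α * t) + (β / α) ^ 2
          + 2 * |e 0| * Real.exp (-α * t / 2) * (β / α) := by
        simp only [hg_def]
        rw [add_sq, mul_pow, sq_abs, hes]
        ring
      rw [this]
      have h4 : 0 ≤ 2 * |e 0| * Real.exp (-α * t / 2) * (β / α) := by
        have : 0 ≤ β / α := div_nonneg hβ hα.le
        positivity
      linarith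
    calc |e t| = Real.sqrt ((e t) ^ 2) := (Real.sqrt_sq_eq_abs _).symm
      _ ≤ Real.sqrt ((g t) ^ 2) := Real.sqrt_le_sqrt hsq
      _ = g t := by rw [Real.sqrt_sq hgt0]
  -- limsup
  have htends : Filter.Tendsto g Filter.atTop (nhds (β / α)) := by
    have h1 : Filter.Tendsto (fun t : ℝ => -α * t / 2) Filter.atTop Filter.atBot := by
      apply Filter.Tendsto.atBot_div_const two_pos
      exact Filter.tendsto_id.const_mul_atTop_of_neg (by linarith)
    have h2 : Filter.Tendsto (fun t : ℝ => |e 0| * Real.exp (-α * t / 2))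
        Filter.atTop (nhds (|e 0| * 0)) :=
      (Real.tendsto_exp_atBot.comp h1).const_mul (|e 0|)
    have h3 := h2.add_const (β / α)
    rw [show |e 0| * 0 + β / α = β / α by ring] at h3
    exact h3
  have hlimsupg : Filter.limsup g Filter.atTop = β / α := htends.limsup_eq
  have hfinal : Filter.limsup (fun t => |e t|) Filter.atTop ≤ Filter.limsup g Filter.atTop := by
    apply Filter.limsup_le_limsup
    · filter_upwards [Filter.eventually_ge_atTop (0 : ℝ)] with t ht
      exact hle t ht
    · exact Filter.isCoboundedUnder_le_of_le Filter.atTop (fun t => abs_nonneg (e t))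
    · exact htends.isBoundedUnder_le
  rw [hlimsupg] at hfinal
  refine hfinal.trans_eq ?_
  rw [hβ_def, hα_def, div_div]
end

section
/- Let α > 0 and β ≥ 0, and suppose v : [0,∞) → [0,∞) is differentiable with v'(t) ≤ -2α·v(t) + 2β·√(v(t)) for all t. Then limsup_{t→∞} √(v(t)) ≤ β/α. -/
theorem sqrt_comparison_lemma
    (α β : ℝ) (hα : 0 < α) (hβ : 0 ≤ β)
    (v : ℝ → ℝ) (hv : ∀ t, 0 ≤ t → 0 ≤ v t) (hdiff : Differentiable ℝ v)
    (hineq : ∀ t, 0 ≤ t →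
      deriv v t ≤ -2 * α * v t + 2 * β * Real.sqrt (v t)) :
    Filter.limsup (fun t => Real.sqrt (v t)) Filter.atTop ≤ β / α := by
  have hcobdd : Filter.IsCoboundedUnder (· ≤ ·) Filter.atTop
      (fun t => Real.sqrt (v t)) :=
    Filter.isCoboundedUnder_le_of_le _ (fun t => Real.sqrt_nonneg _)
  refine le_of_forall_gt_imp_ge_of_dense fun c hc => ?_
  have hc0 : 0 < c := lt_of_le_of_lt (div_nonneg hβ hα.le) hc
  have hαcβ : β < α * c := (div_lt_iff₀' hα).mp hc
  set δ : ℝ := 2 * c * (α * c - β) with hδdef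
  have hδ : 0 < δ := by
    apply mul_pos (by linarith) (by linarith)
  -- key pointwise derivative bound
  have hkey : ∀ s, 0 ≤ s → c ^ 2 ≤ v s → deriv v s ≤ -δ := by
    intro s hs hcs
    have hvs : 0 ≤ v s := hv s hs
    have hu : c ≤ Real.sqrt (v s) := by
      rw [show c = Real.sqrt (c ^ 2) from (Real.sqrt_sq hc0.le).symm]
      exact Real.sqrt_le_sqrt hcs
    have hsq : Real.sqrt (v s) ^ 2 = v s := Real.sq_sqrt hvs
    have := hineq s hs
    set u := Real.sqrt (v s) with hudef
    have h1 : 0 ≤ (u - c) * (α * (u + c) - β) := by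
      apply mul_nonneg (by linarith)
      nlinarith
    nlinarith [this]
  -- Step 2: invariance of {v ≤ c²}
  have hinv : ∀ t₀, 0 ≤ t₀ → v t₀ ≤ c ^ 2 → ∀ t, t₀ ≤ t → v t ≤ c ^ 2 := by
    intro t₀ ht₀ hvt₀ t₁ ht₁
    by_contra hgt
    push_neg at hgt
    set S := {s : ℝ | s ∈ Set.Icc t₀ t₁ ∧ v s ≤ c ^ 2} with hSdef
    have hSclosed : IsClosed S := by
      apply IsClosed.inter isClosed_Icc
      exact isClosed_le (hdiff.continuous) continuous_const
    have hSne : S.Nonempty := ⟨t₀, ⟨le_refl _, ht₁⟩, hvt₀⟩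
    have hSbdd : BddAbove S := ⟨t₁, fun s hs => hs.1.2⟩
    set s₀ := sSup S with hs₀def
    have hs₀S : s₀ ∈ S := hSclosed.csSup_mem hSne hSbdd
    have hs₀le : s₀ ≤ t₁ := hs₀S.1.2
    have hs₀ge : t₀ ≤ s₀ := hs₀S.1.1
    have hne : s₀ ≠ t₁ := by
      intro h
      exact absurd hs₀S.2 (by rw [h]; exact not_le.mpr hgt)
    have hs₀lt : s₀ < t₁ := lt_of_le_of_ne hs₀le hne
    -- on (s₀, t₁], v > c²
    have habove : ∀ s ∈ Set.Ioo s₀ t₁, c ^ 2 ≤ v s := by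
      intro s hs
      by_contra hlt
      push_neg at hlt
      have : s ∈ S := ⟨⟨le_trans hs₀ge hs.1.le, hs.2.le⟩, hlt.le⟩
      exact absurd (le_csSup hSbdd this) (not_le.mpr hs.1)
    have hanti : AntitoneOn v (Set.Icc s₀ t₁) := by
      apply antitoneOn_of_deriv_nonpos (convex_Icc _ _)
        hdiff.continuous.continuousOn hdiff.differentiableOn
      intro x hx
      rw [interior_Icc] at hx
      have hx0 : (0:ℝ) ≤ x := le_trans (le_trans ht₀ hs₀ge) hx.1.le
      exact le_trans (hkey x hx0 (habove x hx)) (by linarith)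
    have : v t₁ ≤ v s₀ :=
      hanti (Set.left_mem_Icc.mpr hs₀le) (Set.right_mem_Icc.mpr hs₀le) hs₀le
    linarith [hs₀S.2]
  -- Step 1: existence of a time with v ≤ c²
  have hescape : ∃ t₀, 0 ≤ t₀ ∧ v t₀ ≤ c ^ 2 := by
    by_contra h
    push_neg at h
    set T : ℝ := v 0 / δ + 1 with hTdef
    have hv00 : 0 ≤ v 0 := hv 0 le_rfl
    have hT0 : 0 < T := by positivity
    have hanti : AntitoneOn (fun t => v t + δ * t) (Set.Icc 0 T) := by
      apply antitoneOn_of_deriv_nonpos (convex_Icc _ _)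
      · exact (hdiff.continuous.add (continuous_const.mul continuous_id)).continuousOn
      · exact (hdiff.add ((differentiable_const δ).mul differentiable_id)).differentiableOn
      · intro x hx
        rw [interior_Icc] at hx
        have hd2 : HasDerivAt (fun t : ℝ => δ * t) δ x := by
          simpa using (hasDerivAt_id x).const_mul δ
        have hd : deriv (fun t => v t + δ * t) x = deriv v x + δ :=
          (((hdiff x).hasDerivAt).add hd2).deriv
        rw [hd]
        have := hkey x hx.1.le (h x hx.1.le).le
        linarith
    have := hanti (Set.left_mem_Icc.mpr hT0.le) (Set.right_mem_Icc.mpr hT0.le) hT0.le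
    simp only [mul_zero, add_zero] at this
    have hvT : 0 ≤ v T := hv T hT0.le
    have : δ * T ≤ v 0 := by linarith
    rw [hTdef] at this
    have : δ * (v 0 / δ) + δ ≤ v 0 := by linarith [mul_add δ (v 0 / δ) 1, this]
    rw [mul_div_cancel₀ _ hδ.ne'] at this
    linarith
  obtain ⟨t₀, ht₀, hvt₀⟩ := hescape
  apply Filter.limsup_le_of_le hcobdd
  filter_upwards [Filter.eventually_ge_atTop t₀] with t ht
  have : v t ≤ c ^ 2 := hinv t₀ ht₀ hvt₀ t ht
  calc Real.sqrt (v t) ≤ Real.sqrt (c ^ 2) := Real.sqrt_le_sqrt this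
    _ = c := Real.sqrt_sq hc0.le
end
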